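/- Let A be a graded-commutative DGA over ℚ, n ≥ 2, a ∈ A₁ with da = 0, and ρ_k ∈ A₁ (1 ≤ k ≤ n) with dρ_k = ρ_{k−1}·a (convention ρ₀ := 0, so dρ₁ = 0). Then the element L_n := Σ_{j=0}^{n−1} (−1)^j [ρ_{n−j}|a|⋯|a] (with j copies of the letter a) of the bar complex B(A) is homogeneous of degree 0 and is a cocycle: (d_I + d_E)(L_n) = 0. -/

import Mathlib

noncomputable section

open scoped TensorProduct DirectSum

/-- A graded-commutative differential graded algebra over `ℚ`, together with the
sign operator `J` (`Ja = (−1)^{deg a} a` on homogeneous elements). -/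
structure GCDGA (A : Type*) [Ring A] [Algebra ℚ A] where
  deg : ℤ → Submodule ℚ A
  decomp : DirectSum.Decomposition deg
  one_mem : (1 : A) ∈ deg 0
  mul_mem : ∀ {i j : ℤ} {x y : A}, x ∈ deg i → y ∈ deg j → x * y ∈ deg (i + j)
  d : A →ₗ[ℚ] A
  d_sq : ∀ x : A, d (d x) = 0
  d_deg : ∀ {i : ℤ} {x : A}, x ∈ deg i → d x ∈ deg (i + 1)
  leibniz : ∀ {i : ℤ} (x y : A), x ∈ deg i →
    d (x * y) = d x * y + ((-1 : ℚ) ^ i) • (x * d y)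
  gcomm : ∀ {i j : ℤ} (x y : A), x ∈ deg i → y ∈ deg j →
    x * y = ((-1 : ℚ) ^ (i * j)) • (y * x)
  J : A →ₗ[ℚ] A
  J_apply : ∀ {i : ℤ} {x : A}, x ∈ deg i → J x = ((-1 : ℚ) ^ i) • x

variable {A : Type*} [Ring A] [Algebra ℚ A]

/-- The `s`-th piece `A^{⊗s}` of the bar construction. -/
abbrev BarPiece (A : Type*) [Ring A] [Algebra ℚ A] (s : ℕ) := ⨂[ℚ] _ : Fin s, A

/-- The bar complex `B(A) = ⊕_{s ≥ 0} A^{⊗s}` as a graded `ℚ`-vector space. -/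
abbrev BarComplex (A : Type*) [Ring A] [Algebra ℚ A] := ⨁ s : ℕ, BarPiece A s

/-- `a ⊗ [a₁|⋯|a_m] ↦ [a|a₁|⋯|a_m]`. -/
def prependL (A : Type*) [Ring A] [Algebra ℚ A] (m : ℕ) :
    A →ₗ[ℚ] BarPiece A m →ₗ[ℚ] BarPiece A (m + 1) :=
  (PiTensorProduct.lift (R := ℚ)).toLinearMap ∘ₗ
    (PiTensorProduct.tprod ℚ (s := fun _ : Fin (m + 1) => A)).curryLeft

/-- Auxiliary: `[a₁|⋯|a_{m+1}] ↦ a₁ ⊗ [a₂|⋯|a_{m+1}]`, curried. -/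
def splitFun (A : Type*) [Ring A] [Algebra ℚ A] (m : ℕ) :
    A →ₗ[ℚ] MultilinearMap ℚ (fun _ : Fin m => A) (A ⊗[ℚ] BarPiece A m) where
  toFun a := (TensorProduct.mk ℚ A (BarPiece A m) a).compMultilinearMap
    (PiTensorProduct.tprod ℚ)
  map_add' a b := by
    ext v
    simp [TensorProduct.add_tmul]
  map_smul' c a := by
    ext v
    simp [TensorProduct.smul_tmul']

/-- `[a₁|⋯|a_{m+1}] ↦ a₁ ⊗ [a₂|⋯|a_{m+1}]`. -/
def splitL (A : Type*) [Ring A] [Algebra ℚ A] (m : ℕ) :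
    BarPiece A (m + 1) →ₗ[ℚ] A ⊗[ℚ] BarPiece A m :=
  PiTensorProduct.lift (LinearMap.uncurryLeft (splitFun A m))

/-- Multiply the first two tensor slots. -/
def mergeHead (A : Type*) [Ring A] [Algebra ℚ A] (s : ℕ) :
    BarPiece A (s + 2) →ₗ[ℚ] BarPiece A (s + 1) :=
  (TensorProduct.lift (prependL A s)) ∘ₗ
    (TensorProduct.map (LinearMap.mul' ℚ A) LinearMap.id) ∘ₗ
    (TensorProduct.assoc ℚ A A (BarPiece A s)).symm.toLinearMap ∘ₗ
    (TensorProduct.map LinearMap.id (splitL A s)) ∘ₗ splitL A (s + 1)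

/-- Multiply the two adjacent tensor slots at (0-indexed) positions `i, i+1`. -/
def contractL (A : Type*) [Ring A] [Algebra ℚ A] :
    (s i : ℕ) → (BarPiece A (s + 2) →ₗ[ℚ] BarPiece A (s + 1))
  | s, 0 => mergeHead A s
  | 0, _ + 1 => mergeHead A 0
  | s + 1, i + 1 =>
      (TensorProduct.lift (prependL A (s + 1))) ∘ₗ
        (TensorProduct.map LinearMap.id (contractL A s i)) ∘ₗ splitL A (s + 2)

/-- The internal bar differential on the `s`-th piece. -/
def dIcomp (G : GCDGA A) (s : ℕ) : BarPiece A s →ₗ[ℚ] BarPiece A s :=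
  ∑ i : Fin s, ((-1 : ℚ) ^ ((i : ℕ) + 1)) •
    PiTensorProduct.map (fun j : Fin s =>
      if j < i then G.J else if j = i then G.d else LinearMap.id)

/-- The external bar differential on the `(s+2)`-nd piece. -/
def dEcomp (G : GCDGA A) (s : ℕ) : BarPiece A (s + 2) →ₗ[ℚ] BarPiece A (s + 1) :=
  ∑ i : Fin (s + 1), ((-1 : ℚ) ^ (i : ℕ)) •
    (contractL A s i ∘ₗ
      PiTensorProduct.map (fun j : Fin (s + 2) =>
        if (j : ℕ) ≤ (i : ℕ) then G.J else LinearMap.id))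

/-- The external differential out of the `s`-th piece (zero for `s = 0, 1`). -/
def dEpiece (G : GCDGA A) : (s : ℕ) → (BarPiece A s →ₗ[ℚ] BarComplex A)
  | 0 => 0
  | 1 => 0
  | s + 2 => (DirectSum.lof ℚ ℕ (fun k => BarPiece A k) (s + 1)) ∘ₗ dEcomp G s

/-- The internal differential `d_I` of the bar complex. -/
def barDI (G : GCDGA A) : BarComplex A →ₗ[ℚ] BarComplex A :=
  DirectSum.toModule ℚ ℕ _ (fun s =>
    (DirectSum.lof ℚ ℕ (fun k => BarPiece A k) s) ∘ₗ dIcomp G s)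

/-- The external differential `d_E` of the bar complex. -/
def barDE (G : GCDGA A) : BarComplex A →ₗ[ℚ] BarComplex A :=
  DirectSum.toModule ℚ ℕ _ (dEpiece G)

/-- The degree-`m` part of the bar complex: spanned by words `[a₁|⋯|a_s]` of
homogeneous letters with `(∑ deg aᵢ) − s = m`. -/
def barDeg (G : GCDGA A) (m : ℤ) : Submodule ℚ (BarComplex A) :=
  Submodule.span ℚ {x | ∃ (s : ℕ) (v : Fin s → A) (dv : Fin s → ℤ),
    (∀ k, v k ∈ G.deg (dv k)) ∧ (∑ k, dv k) - (s : ℤ) = m ∧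
    x = DirectSum.lof ℚ ℕ (fun k => BarPiece A k) s (PiTensorProduct.tprod ℚ v)}

/-! Write `w j = [ρ_{n-j}|a|⋯|a]`. As `da = 0`, `d_I` only hits the first letter, so
`d_I (w j) = -[ρ_{n-j-1}a|a|⋯|a]`. As all letters are odd, every `J` in `d_E` contributes the
same sign and every product of two adjacent letters `a` vanishes (`a² = 0`), so `d_E (w (j+1))`
is that same word. The alternating sum of the `w j` therefore telescopes, and both ends vanish:
`w 0` has length one and `w n` starts with `ρ₀ = 0`. -/

namespace GCDGA

variable (G : GCDGA A) {i : ℤ} {x : A}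

theorem J_eq_neg_of_odd (hi : Odd i) (hx : x ∈ G.deg i) : G.J x = -x := by
  rw [G.J_apply hx, hi.neg_one_zpow, neg_one_smul]

theorem mul_self_eq_zero_of_odd (hi : Odd i) (hx : x ∈ G.deg i) : x * x = 0 := by
  have hneg : x * x = -(x * x) := by
    rw [← neg_one_smul ℚ (x * x), ← (hi.mul hi).neg_one_zpow]
    exact G.gcomm x x hx hx
  have htwo : (2 : ℚ) • (x * x) = 0 := by
    rw [two_smul]
    nth_rewrite 1 [hneg]
    exact neg_add_cancel _
  simpa using htwo

end GCDGA

variable (G : GCDGA A)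

theorem splitL_tprod_cons {m : ℕ} (x : A) (u : Fin m → A) :
    splitL A m (PiTensorProduct.tprod ℚ (Fin.cons x u)) =
      x ⊗ₜ[ℚ] PiTensorProduct.tprod ℚ u := by
  simp [splitL, splitFun, LinearMap.uncurryLeft_apply, Fin.tail_cons]

theorem prependL_tprod {m : ℕ} (x : A) (u : Fin m → A) :
    prependL A m x (PiTensorProduct.tprod ℚ u) = PiTensorProduct.tprod ℚ (Fin.cons x u) := by
  simp [prependL]

theorem contractL_zero_tprod_cons_cons {s : ℕ} (x y : A) (u : Fin s → A) :
    contractL A s 0 (PiTensorProduct.tprod ℚ (Fin.cons x (Fin.cons y u))) =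
      PiTensorProduct.tprod ℚ (Fin.cons (x * y) u) := by
  simp [contractL, mergeHead, splitL_tprod_cons, prependL_tprod]

theorem contractL_succ_succ_tprod_cons {s : ℕ} (i : ℕ) (x : A) (u : Fin (s + 2) → A) :
    contractL A (s + 1) (i + 1) (PiTensorProduct.tprod ℚ (Fin.cons x u)) =
      prependL A (s + 1) x (contractL A s i (PiTensorProduct.tprod ℚ u)) := by
  simp [contractL, splitL_tprod_cons]

theorem Fin.const_eq_cons {α : Type*} {m : ℕ} (y : α) :
    (fun _ : Fin (m + 1) => y) = Fin.cons y (fun _ : Fin m => y) :=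
  (Fin.cons_self_tail _).symm

theorem contractL_tprod_const {y : A} (hy : y * y = 0) (s i : ℕ) :
    contractL A s i (PiTensorProduct.tprod ℚ (fun _ : Fin (s + 2) => y)) = 0 := by
  have hmerge : ∀ t,
      mergeHead A t (PiTensorProduct.tprod ℚ (fun _ : Fin (t + 2) => y)) = 0 := by
    intro t
    rw [Fin.const_eq_cons y, Fin.const_eq_cons (m := t) y, ← contractL,
      contractL_zero_tprod_cons_cons, hy]
    exact MultilinearMap.map_coord_zero _ 0 rfl
  induction s generalizing i with
  -- `contractL A 0 (i + 1)` falls back to `mergeHead A 0`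
  | zero => cases i <;> exact hmerge 0
  | succ s ih =>
    cases i with
    | zero => exact hmerge (s + 1)
    | succ i => rw [Fin.const_eq_cons y, contractL_succ_succ_tprod_cons, ih, map_zero]

theorem dIcomp_tprod_cons {s : ℕ} (x : A) {u : Fin s → A}
    (hu : ∀ k, G.d (u k) = 0) :
    dIcomp G (s + 1) (PiTensorProduct.tprod ℚ (Fin.cons x u)) =
      -PiTensorProduct.tprod ℚ (Fin.cons (G.d x) u) := by
  have htail : ∀ k : Fin s, ((-1 : ℚ) ^ ((k.succ : ℕ) + 1) • PiTensorProduct.map (fun j =>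
      if j < k.succ then G.J else if j = k.succ then G.d else LinearMap.id))
      (PiTensorProduct.tprod ℚ (Fin.cons x u)) = 0 := by
    intro k
    rw [LinearMap.smul_apply, PiTensorProduct.map_tprod,
      MultilinearMap.map_coord_zero _ k.succ (by simp [hu]), smul_zero]
  have hhead : (fun j : Fin (s + 1) =>
      (if j < 0 then G.J else if j = 0 then G.d else LinearMap.id)
        ((Fin.cons x u : Fin (s + 1) → A) j)) =
      Fin.cons (G.d x) u := by
    funext j
    refine Fin.cases ?_ (fun k => ?_) j <;> simp [Fin.succ_ne_zero]
  rw [dIcomp, LinearMap.sum_apply, Fin.sum_univ_succ, Finset.sum_eq_zero fun k _ => htail k,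
    add_zero, LinearMap.smul_apply, PiTensorProduct.map_tprod, hhead]
  simp

theorem Fin.prod_ite_le_neg_one {R : Type*} [CommRing R] (s i : ℕ) (hi : i < s + 1) :
    (∏ k : Fin (s + 2), if (k : ℕ) ≤ i then (-1 : R) else 1) = (-1) ^ (i + 1) := by
  rw [Fin.prod_univ_eq_prod_range (fun k => if k ≤ i then (-1 : R) else 1), Finset.prod_ite]
  have hrange : {k ∈ Finset.range (s + 2) | k ≤ i} = Finset.range (i + 1) := by
    ext k
    simp only [Finset.mem_filter, Finset.mem_range]
    omega
  simp [hrange]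

theorem map_J_le_tprod {s : ℕ} {v : Fin (s + 2) → A}
    (hv : ∀ k, G.J (v k) = -v k) (i : Fin (s + 1)) :
    PiTensorProduct.map (fun k : Fin (s + 2) => if (k : ℕ) ≤ i then G.J else LinearMap.id)
      (PiTensorProduct.tprod ℚ v) =
      (-1 : ℚ) ^ ((i : ℕ) + 1) • PiTensorProduct.tprod ℚ v := by
  have hsigns : (fun k : Fin (s + 2) => (if (k : ℕ) ≤ i then G.J else LinearMap.id) (v k)) =
      fun k : Fin (s + 2) => (if (k : ℕ) ≤ i then (-1 : ℚ) else 1) • v k := by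
    funext k
    split_ifs <;> simp [hv]
  rw [PiTensorProduct.map_tprod, hsigns, MultilinearMap.map_smul_univ,
    Fin.prod_ite_le_neg_one s i i.is_lt]

theorem dEcomp_tprod_of_J_eq_neg {s : ℕ} {v : Fin (s + 2) → A}
    (hv : ∀ k, G.J (v k) = -v k) :
    dEcomp G s (PiTensorProduct.tprod ℚ v) =
      -∑ i : Fin (s + 1), contractL A s i (PiTensorProduct.tprod ℚ v) := by
  simp only [dEcomp, LinearMap.sum_apply, LinearMap.smul_apply, LinearMap.comp_apply,
    map_J_le_tprod G hv, map_smul, smul_smul, ← pow_add, ← Finset.sum_neg_distrib]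
  refine Finset.sum_congr rfl fun i _ => ?_
  rw [← add_assoc, pow_succ, ← two_mul, pow_mul]
  simp

theorem dEcomp_tprod_cons_const {s : ℕ} {x a : A} (hx : G.J x = -x)
    (ha : G.J a = -a) (haa : a * a = 0) :
    dEcomp G s (PiTensorProduct.tprod ℚ (Fin.cons x (fun _ : Fin (s + 1) => a))) =
      -PiTensorProduct.tprod ℚ (Fin.cons (x * a) (fun _ : Fin s => a)) := by
  have hv : ∀ k, G.J ((Fin.cons x fun _ => a : Fin (s + 2) → A) k) =
      -(Fin.cons x fun _ => a : Fin (s + 2) → A) k :=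
    fun k => Fin.cases hx (fun _ => ha) k
  have hinner : ∀ i : Fin s, contractL A s (i.succ : ℕ)
      (PiTensorProduct.tprod ℚ (Fin.cons x (fun _ : Fin (s + 1) => a))) = 0 := by
    intro i
    obtain ⟨t, rfl⟩ : ∃ t, s = t + 1 := ⟨s - 1, by have := i.is_lt; omega⟩
    rw [Fin.val_succ, contractL_succ_succ_tprod_cons, contractL_tprod_const haa, map_zero]
  rw [dEcomp_tprod_of_J_eq_neg G hv, Fin.sum_univ_succ, Finset.sum_eq_zero fun i _ => hinner i,
    add_zero, Fin.val_zero, Fin.const_eq_cons a, contractL_zero_tprod_cons_cons]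

def barWord (x a : A) (j : ℕ) : BarComplex A :=
  DirectSum.lof ℚ ℕ (fun k => BarPiece A k) (j + 1)
    (PiTensorProduct.tprod ℚ (Fin.cons x (fun _ : Fin j => a)))

theorem barWord_zero_left (a : A) (j : ℕ) : barWord 0 a j = 0 := by
  rw [barWord, MultilinearMap.map_coord_zero _ 0 (by simp), map_zero]

theorem barWord_mem_barDeg_zero {x a : A} (hx : x ∈ G.deg 1) (ha : a ∈ G.deg 1)
    (j : ℕ) : barWord x a j ∈ barDeg G 0 := by
  refine Submodule.subset_span ⟨j + 1, _, fun _ => 1, fun k => ?_, by simp, rfl⟩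
  exact Fin.cases hx (fun _ => ha) k

theorem barDI_barWord (x : A) {a : A} (hda : G.d a = 0) (j : ℕ) :
    barDI G (barWord x a j) = -barWord (G.d x) a j := by
  rw [barWord, barDI, DirectSum.toModule_lof, LinearMap.comp_apply,
    dIcomp_tprod_cons G x fun _ => hda, map_neg, barWord]

theorem barDE_barWord_zero (x a : A) : barDE G (barWord x a 0) = 0 := by
  rw [barWord, barDE, DirectSum.toModule_lof]
  rfl

theorem barDE_barWord_succ {i k : ℤ} (hi : Odd i) (hk : Odd k) {x a : A}
    (hx : x ∈ G.deg i) (ha : a ∈ G.deg k) (j : ℕ) :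
    barDE G (barWord x a (j + 1)) = -barWord (x * a) a j := by
  rw [barWord, barDE, DirectSum.toModule_lof, dEpiece, LinearMap.comp_apply,
    dEcomp_tprod_cons_const G (G.J_eq_neg_of_odd hi hx) (G.J_eq_neg_of_odd hk ha)
      (G.mul_self_eq_zero_of_odd hk ha), map_neg, barWord]

theorem LinearMap.add_apply_alternating_sum_eq_zero_of_zigzag {R M N : Type*} [CommRing R]
    [AddCommGroup M] [AddCommGroup N] [Module R M] [Module R N] (D₁ D₂ : M →ₗ[R] N)
    (w : ℕ → M) (n : ℕ) (hfirst : D₂ (w 0) = 0) (hlast : D₂ (w n) = 0)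
    (hstep : ∀ j < n, D₁ (w j) = D₂ (w (j + 1))) :
    (D₁ + D₂) (∑ j ∈ Finset.range n, ((-1 : R) ^ j) • w j) = 0 := by
  have hterm : ∀ j ∈ Finset.range n, (D₁ + D₂) (((-1 : R) ^ j) • w j) =
      -((-1 : R) ^ (j + 1) • D₂ (w (j + 1)) - (-1 : R) ^ j • D₂ (w j)) := by
    intro j hj
    rw [map_smul, LinearMap.add_apply, hstep j (Finset.mem_range.mp hj), pow_succ]
    module
  rw [map_sum, Finset.sum_congr rfl hterm, Finset.sum_neg_distrib,
    Finset.sum_range_sub (fun j => (-1 : R) ^ j • D₂ (w j)), hfirst, hlast]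
  simp

theorem polylog_cocycle_general (G : GCDGA A) (n : ℕ)
    (a : A) (ha : a ∈ G.deg 1) (hda : G.d a = 0)
    (ρ : ℕ → A) (hρ0 : ρ 0 = 0)
    (hρ : ∀ k, 1 ≤ k → k ≤ n → ρ k ∈ G.deg 1)
    (hdρ : ∀ k, 1 ≤ k → k ≤ n → G.d (ρ k) = ρ (k - 1) * a) :
    (∑ j ∈ Finset.range n, ((-1 : ℚ) ^ j) •
        DirectSum.lof ℚ ℕ (fun k => BarPiece A k) (j + 1)
          (PiTensorProduct.tprod ℚ (Fin.cons (ρ (n - j)) (fun _ : Fin j => a))))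
      ∈ barDeg G 0 ∧
    (barDI G + barDE G)
      (∑ j ∈ Finset.range n, ((-1 : ℚ) ^ j) •
        DirectSum.lof ℚ ℕ (fun k => BarPiece A k) (j + 1)
          (PiTensorProduct.tprod ℚ (Fin.cons (ρ (n - j)) (fun _ : Fin j => a)))) = 0 := by
  change (∑ j ∈ Finset.range n, ((-1 : ℚ) ^ j) • barWord (ρ (n - j)) a j) ∈ barDeg G 0 ∧
    (barDI G + barDE G)
      (∑ j ∈ Finset.range n, ((-1 : ℚ) ^ j) • barWord (ρ (n - j)) a j) = 0
  have hρ_mem : ∀ k ≤ n, ρ k ∈ G.deg 1 := fun k hk => by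
    rcases Nat.eq_zero_or_pos k with rfl | hk0
    · exact hρ0 ▸ zero_mem _
    · exact hρ k hk0 hk
  refine ⟨Submodule.sum_mem _ fun j _ => Submodule.smul_mem _ _
    (barWord_mem_barDeg_zero G (hρ_mem _ (Nat.sub_le n j)) ha j), ?_⟩
  refine LinearMap.add_apply_alternating_sum_eq_zero_of_zigzag _ _ _ n
    (barDE_barWord_zero G _ a) (by rw [Nat.sub_self, hρ0, barWord_zero_left, map_zero])
    fun j hj => ?_
  rw [barDI_barWord G _ hda, barDE_barWord_succ G odd_one odd_one (hρ_mem _ (by omega)) ha,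
    hdρ _ (by omega) (by omega), show n - j - 1 = n - (j + 1) by omega]

/-- the element
`L_n := ∑_{j=0}^{n−1} (−1)^j [ρ_{n−j}|a|⋯|a]` (with `j` copies of the letter `a`)
is homogeneous of degree `0` in the bar complex and is a cocycle for `d_I + d_E`. -/
theorem polylog_cocycle (G : GCDGA A) (n : ℕ) (hn : 2 ≤ n)
    (a : A) (ha : a ∈ G.deg 1) (hda : G.d a = 0)
    (ρ : ℕ → A) (hρ0 : ρ 0 = 0)
    (hρ : ∀ k, 1 ≤ k → k ≤ n → ρ k ∈ G.deg 1)
    (hdρ : ∀ k, 1 ≤ k → k ≤ n → G.d (ρ k) = ρ (k - 1) * a) :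
    (∑ j ∈ Finset.range n, ((-1 : ℚ) ^ j) •
        DirectSum.lof ℚ ℕ (fun k => BarPiece A k) (j + 1)
          (PiTensorProduct.tprod ℚ (Fin.cons (ρ (n - j)) (fun _ : Fin j => a))))
      ∈ barDeg G 0 ∧
    (barDI G + barDE G)
      (∑ j ∈ Finset.range n, ((-1 : ℚ) ^ j) •
        DirectSum.lof ℚ ℕ (fun k => BarPiece A k) (j + 1)
          (PiTensorProduct.tprod ℚ (Fin.cons (ρ (n - j)) (fun _ : Fin j => a)))) = 0 :=
  polylog_cocycle_general G n a ha hda ρ hρ0 hρ hdρ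

end
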